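/- arXiv:1606.04059 — 8 statements merged into one kernel-verified Lean document; each statement's English description precedes it below -/
import Mathlib

section
/- Let M be a finite monoid, A a set, and φ : A* → M a monoid homomorphism from the free monoid on A. Then for every word w ∈ A* there exists a word v ∈ A* such that v is a scattered subword (subsequence/sublist) of w, the length of v is strictly less than the cardinality of M, and φ(v) = φ(w). -/
/-!
Among the prefixes of a word of length at least `|M|` there are more than `|M|` many, so two of
them, `w[0, i)` and `w[0, j)` with `i < j`, have the same image. Cutting out the factor `w[i, j)`
then gives a strictly shorter scattered subword with the same image; iterate.
-/

namespace List

variable {A : Type*}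

theorem take_append_drop_sublist (l : List A) {i j : ℕ} (h : i ≤ j) :
    l.take i ++ l.drop j <+ l := by
  conv_rhs => rw [← take_append_drop i l]
  exact (Sublist.refl _).append (drop_sublist_drop_left l h)

theorem exists_lt_map_take_eq_of_card_le {M : Type*} [Fintype M] (f : List A → M) (l : List A)
    (h : Fintype.card M ≤ l.length) :
    ∃ i j, i < j ∧ j ≤ l.length ∧ f (l.take i) = f (l.take j) := by
  obtain ⟨i, j, hne, heq⟩ := Fintype.exists_ne_map_eq_of_card_lt
    (fun i : Fin (l.length + 1) => f (l.take i)) (by simpa [Nat.lt_succ_iff] using h)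
  rcases Fin.lt_or_lt_of_ne hne with hij | hji
  · exact ⟨i, j, hij, j.is_le, heq⟩
  · exact ⟨j, i, hji, i.is_le, heq.symm⟩

end List

namespace FreeMonoid

variable {A M : Type*} [Monoid M]

theorem map_ofList_take_append_drop (φ : FreeMonoid A →* M) {l : List A} {i j : ℕ}
    (h : φ (ofList (l.take i)) = φ (ofList (l.take j))) :
    φ (ofList (l.take i ++ l.drop j)) = φ (ofList l) := by
  rw [ofList_append, map_mul, h, ← map_mul, ← ofList_append, List.take_append_drop]

theorem exists_sublist_length_lt_map_eq_of_card_le [Fintype M] (φ : FreeMonoid A →* M)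
    {l : List A} (h : Fintype.card M ≤ l.length) :
    ∃ l', l'.Sublist l ∧ l'.length < l.length ∧ φ (ofList l') = φ (ofList l) := by
  obtain ⟨i, j, hij, hj, heq⟩ := l.exists_lt_map_take_eq_of_card_le (φ ∘ ofList) h
  refine ⟨l.take i ++ l.drop j, l.take_append_drop_sublist hij.le, ?_,
    map_ofList_take_append_drop φ heq⟩
  simp only [List.length_append, List.length_take, List.length_drop]
  omega

theorem exists_sublist_length_lt_card_map_eq [Fintype M] (φ : FreeMonoid A →* M) (l : List A) :
    ∃ l', l'.Sublist l ∧ l'.length < Fintype.card M ∧ φ (ofList l') = φ (ofList l) := by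
  by_cases hl : l.length < Fintype.card M
  · exact ⟨l, .refl l, hl, rfl⟩
  obtain ⟨l₁, h₁, hlen₁, hφ₁⟩ := exists_sublist_length_lt_map_eq_of_card_le φ (not_lt.mp hl)
  obtain ⟨l₂, h₂, hlen₂, hφ₂⟩ := exists_sublist_length_lt_card_map_eq φ l₁
  exact ⟨l₂, h₂.trans h₁, hlen₂, hφ₂.trans hφ₁⟩
termination_by l.length

end FreeMonoid

/-- For a finite monoid `M` and a monoid homomorphism `φ` from the free
monoid on a set `A` to `M`, every word `w` admits a scattered subword (sublist) `v`
of length strictly less than the cardinality of `M` with `φ v = φ w`. -/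
theorem subword_with_same_image {A M : Type*} [Monoid M] [Fintype M]
    (φ : FreeMonoid A →* M) (w : FreeMonoid A) :
    ∃ v : FreeMonoid A,
      List.Sublist (FreeMonoid.toList v) (FreeMonoid.toList w) ∧
      (FreeMonoid.toList v).length < Fintype.card M ∧
      φ v = φ w := by
  obtain ⟨v, hsub, hlen, hφ⟩ := FreeMonoid.exists_sublist_length_lt_card_map_eq φ w.toList
  exact ⟨FreeMonoid.ofList v, hsub, hlen, by simpa using hφ⟩
end

section
/- Let L₁ = {(a²b)^{2k} : k ≥ 0} ∪ {(ab²)^{2k} : k ≥ 0} over the alphabet {a, b}. For every nonempty word w over {a, b}: w is syntactically equivalent to b·a·b² with respect to L₁ if and only if w = b·a·b²·(a·b²)^{2k} for some natural number k. -/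
/-- The two-letter alphabet `{a, b}`. -/
inductive AB : Type
  | a : AB
  | b : AB

/-- Words over `{a, b}`, as elements of the free monoid (the empty word is `1`). -/
abbrev Word : Type := FreeMonoid AB

/-- The letter `a` as a word. -/
def wa : Word := FreeMonoid.of AB.a

/-- The letter `b` as a word. -/
def wb : Word := FreeMonoid.of AB.b

/-- Syntactic equivalence of `u` and `v` with respect to the language `L`:
for all (possibly empty) words `p, q`, `p·u·q ∈ L ↔ p·v·q ∈ L`. -/
def SynEq (L : Set Word) (u v : Word) : Prop :=
  ∀ p q : Word, p * u * q ∈ L ↔ p * v * q ∈ L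

/-- The language `L₁ = ((a²b)²)* ∪ ((ab²)²)* = {(a²b)^(2k) : k ≥ 0} ∪ {(ab²)^(2k) : k ≥ 0}`. -/
def L1 : Set Word :=
  {w | ∃ k : ℕ, w = (wa ^ 2 * wb) ^ (2 * k)} ∪ {w | ∃ k : ℕ, w = (wa * wb ^ 2) ^ (2 * k)}

/-!
Inside a word of `L₁` the factor `bb` forces the branch `((ab²)²)*`, and there an occurrence
of `ba` can only straddle the boundary between two blocks `ab²`. Hence `p·bab²·q ∈ L₁` exactly
when `p·b` and `q` are powers of `ab²` with odd total exponent, a condition that does not change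
when `q` is replaced by `(ab²)^(2k)·q`. Conversely `ab·bab² = (ab²)²`, so `ab·w ∈ L₁`, which
forces `w = b·(ab²)^(2k+1)`.
-/

open AB

theorem FreeMonoid.length_pow {α : Type*} (u : FreeMonoid α) (n : ℕ) :
    (u ^ n).length = n * u.length := by
  induction n with
  | zero => simp
  | succ n ih => rw [pow_succ, FreeMonoid.length_mul, ih, Nat.succ_mul]

theorem FreeMonoid.eq_pow_sub_of_pow_mul_eq_pow {α : Type*} {u q : FreeMonoid α} {m n : ℕ}
    (hu : u ≠ 1) (h : u ^ m * q = u ^ n) : m ≤ n ∧ q = u ^ (n - m) := by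
  have hlen := congrArg FreeMonoid.length h
  simp only [FreeMonoid.length_mul, FreeMonoid.length_pow] at hlen
  have hu : 0 < u.length := Nat.pos_of_ne_zero (mt FreeMonoid.length_eq_zero.1 hu)
  have hmn : m ≤ n := Nat.le_of_mul_le_mul_right (by omega) hu
  refine ⟨hmn, mul_left_cancel (a := u ^ m) ?_⟩
  rw [h, ← pow_add, Nat.add_sub_cancel' hmn]

theorem toList_abb_pow_succ (n : ℕ) :
    ((wa * wb ^ 2) ^ (n + 1)).toList = a :: b :: b :: ((wa * wb ^ 2) ^ n).toList := by
  rw [pow_succ']; rfl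

theorem toList_aab_pow_succ (n : ℕ) :
    ((wa ^ 2 * wb) ^ (n + 1)).toList = a :: a :: b :: ((wa ^ 2 * wb) ^ n).toList := by
  rw [pow_succ']; rfl

-- The extra leading `b` makes the induction go through: it accounts for a `bb` straddling the
-- boundary between two blocks `a²b`.
theorem not_bb_infix_b_cons_aab_pow (n : ℕ) :
    ¬ [b, b] <:+: b :: ((wa ^ 2 * wb) ^ n).toList := by
  induction n with
  | zero => exact fun h => by simpa using h.length_le
  | succ n ih => simpa [toList_aab_pow_succ, List.infix_cons_iff] using ih

theorem mul_bb_mul_ne_aab_pow (p q : Word) (n : ℕ) : p * wb ^ 2 * q ≠ (wa ^ 2 * wb) ^ n := by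
  intro h
  have hbb : [b, b] <:+: ((wa ^ 2 * wb) ^ n).toList := h ▸ ⟨p.toList, q.toList, rfl⟩
  exact not_bb_infix_b_cons_aab_pow n (hbb.trans (List.suffix_cons _ _).isInfix)

theorem ba_split_abb_pow_list (n : ℕ) (p q : List AB)
    (h : p ++ b :: a :: q = ((wa * wb ^ 2) ^ n).toList) :
    ∃ i j, p ++ [b] = ((wa * wb ^ 2) ^ i).toList ∧ a :: q = ((wa * wb ^ 2) ^ j).toList ∧
      i + j = n := by
  induction n generalizing p with
  | zero => cases p <;> simp at h
  | succ n ih =>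
    rw [toList_abb_pow_succ] at h
    match p, h with
    | [], h => simp at h
    | [_], h => simp at h
    | [_, _], h =>
      simp only [List.cons_append, List.nil_append, List.cons.injEq] at h
      obtain ⟨rfl, rfl, -, h⟩ := h
      exact ⟨1, n, rfl, h, by omega⟩
    | _ :: _ :: _ :: p, h =>
      simp only [List.cons_append, List.cons.injEq] at h
      obtain ⟨rfl, rfl, rfl, h⟩ := h
      obtain ⟨i, j, hp, hq, rfl⟩ := ih p h
      exact ⟨i + 1, j, by simp [toList_abb_pow_succ, hp], hq, by omega⟩

theorem abb_ne_one : wa * wb ^ 2 ≠ 1 := by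
  simp [wa, wb]

theorem ba_split_abb_pow {p q : Word} {n : ℕ} (h : p * wb * wa * q = (wa * wb ^ 2) ^ n) :
    ∃ i j, p * wb = (wa * wb ^ 2) ^ i ∧ wa * q = (wa * wb ^ 2) ^ j ∧ i + j = n := by
  obtain ⟨i, j, hp, hq, hij⟩ := ba_split_abb_pow_list n p.toList q.toList
    (by simpa [wa, wb] using congrArg FreeMonoid.toList h)
  exact ⟨i, j, FreeMonoid.toList.injective hp, FreeMonoid.toList.injective hq, hij⟩

theorem mul_babb_mul_mem_L1_iff (p q : Word) :
    p * (wb * wa * wb ^ 2) * q ∈ L1 ↔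
      ∃ i j, p * wb = (wa * wb ^ 2) ^ i ∧ q = (wa * wb ^ 2) ^ j ∧ Odd (i + j) := by
  constructor
  · rintro (⟨k, hk⟩ | ⟨k, hk⟩)
    · exact absurd (by simpa only [mul_assoc] using hk) (mul_bb_mul_ne_aab_pow (p * wb * wa) q _)
    · obtain ⟨i, j, hp, hq, hij⟩ :=
        ba_split_abb_pow (q := wb ^ 2 * q) (by simpa only [mul_assoc] using hk)
      obtain ⟨hj, rfl⟩ := FreeMonoid.eq_pow_sub_of_pow_mul_eq_pow (m := 1) abb_ne_one
        (by simpa only [pow_one, mul_assoc] using hq)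
      exact ⟨i, j - 1, hp, rfl, k - 1, by omega⟩
  · rintro ⟨i, j, hp, rfl, m, hm⟩
    refine Or.inr ⟨m + 1, ?_⟩
    calc p * (wb * wa * wb ^ 2) * (wa * wb ^ 2) ^ j
        = p * wb * (wa * wb ^ 2) ^ 1 * (wa * wb ^ 2) ^ j := by simp only [pow_one, mul_assoc]
      _ = (wa * wb ^ 2) ^ (2 * (m + 1)) := by rw [hp, ← pow_add, ← pow_add]; congr 1; omega

theorem synEq_babb_mul_abb_pow_even (k : ℕ) :
    SynEq L1 (wb * wa * wb ^ 2 * (wa * wb ^ 2) ^ (2 * k)) (wb * wa * wb ^ 2) := by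
  intro p q
  rw [show p * (wb * wa * wb ^ 2 * (wa * wb ^ 2) ^ (2 * k)) * q
      = p * (wb * wa * wb ^ 2) * ((wa * wb ^ 2) ^ (2 * k) * q) by simp only [mul_assoc],
    mul_babb_mul_mem_L1_iff, mul_babb_mul_mem_L1_iff]
  constructor
  · rintro ⟨i, j, hp, hq, r, hr⟩
    obtain ⟨hj, rfl⟩ := FreeMonoid.eq_pow_sub_of_pow_mul_eq_pow abb_ne_one hq
    exact ⟨i, j - 2 * k, hp, rfl, r - k, by omega⟩
  · rintro ⟨i, j, hp, rfl, r, hr⟩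
    exact ⟨i, 2 * k + j, hp, (pow_add _ _ _).symm, r + k, by omega⟩

theorem eq_babb_mul_abb_pow_of_ab_mul_mem_L1 {w : Word} (h : wa * wb * w ∈ L1) :
    ∃ k : ℕ, w = wb * wa * wb ^ 2 * (wa * wb ^ 2) ^ (2 * k) := by
  rcases h with ⟨_ | k, hk⟩ | ⟨_ | k, hk⟩
  · simpa [wa, wb] using congrArg FreeMonoid.toList hk
  · rw [show 2 * (k + 1) = 2 * k + 1 + 1 by ring] at hk
    have hk := congrArg FreeMonoid.toList hk
    rw [toList_aab_pow_succ] at hk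
    simp [wa, wb] at hk
  · simpa [wa, wb] using congrArg FreeMonoid.toList hk
  · refine ⟨k, mul_left_cancel (a := wa * wb) ?_⟩
    rw [hk, show 2 * (k + 1) = 1 + 1 + 2 * k by ring, pow_add, pow_add, pow_one]
    simp only [sq, mul_assoc]

theorem synEq_bab2_iff_general (w : Word) :
    SynEq L1 w (wb * wa * wb ^ 2) ↔
      ∃ k : ℕ, w = wb * wa * wb ^ 2 * (wa * wb ^ 2) ^ (2 * k) := by
  constructor
  · intro h
    have hbabb : wa * wb * (wb * wa * wb ^ 2) * 1 ∈ L1 :=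
      Or.inr ⟨1, by simp only [mul_one, sq, mul_assoc]⟩
    exact eq_babb_mul_abb_pow_of_ab_mul_mem_L1 (by simpa using (h _ _).2 hbabb)
  · rintro ⟨k, rfl⟩
    exact synEq_babb_mul_abb_pow_even k

/-- a nonempty word `w` is syntactically equivalent to `b·a·b²` with
respect to `L₁` if and only if `w = b·a·b²·(a·b²)^(2k)` for some `k : ℕ`. -/
theorem synEq_bab2_iff (w : Word) (hw : w ≠ 1) :
    SynEq L1 w (wb * wa * wb ^ 2) ↔
      ∃ k : ℕ, w = wb * wa * wb ^ 2 * (wa * wb ^ 2) ^ (2 * k) :=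
  synEq_bab2_iff_general w
end

section
/- Let L₁ = {(a²b)^{2k} : k ≥ 0} ∪ {(ab²)^{2k} : k ≥ 0} over the alphabet {a, b}. For every nonempty word w over {a, b}: w is syntactically equivalent to a²·b·a with respect to L₁ if and only if w = (a²·b)^{2k}·a²·b·a for some natural number k. -/
namespace FreeMonoid

variable {α : Type*}

theorem length_pow_s3 (x : FreeMonoid α) (n : ℕ) : (x ^ n).length = n * x.length := by
  induction n with
  | zero => simp
  | succ n ih => rw [pow_succ, length_mul, ih, Nat.succ_mul]

theorem exists_eq_pow_of_pow_mul_eq_pow {u x : FreeMonoid α} (hu : u ≠ 1) {j n : ℕ}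
    (h : u ^ j * x = u ^ n) : ∃ t, x = u ^ t ∧ n = j + t := by
  have hjn : j ≤ n := by
    have hlen := congrArg length h
    rw [length_mul, length_pow_s3, length_pow_s3] at hlen
    exact Nat.le_of_mul_le_mul_right (hlen ▸ Nat.le_add_right _ _)
      (Nat.pos_of_ne_zero (mt length_eq_zero.1 hu))
  obtain ⟨t, rfl⟩ := Nat.exists_eq_add_of_le hjn
  exact ⟨t, mul_left_cancel (h.trans (pow_add u j t)), rfl⟩

theorem eq_of_mul_of_eq_mul_of {x y : FreeMonoid α} {a b : α} (h : x * of a = y * of b) :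
    a = b := by
  simpa using congrArg (fun z => z.toList.getLast?) h

end FreeMonoid

open FreeMonoid

@[simp] theorem toList_wa : wa.toList = [AB.a] := rfl

@[simp] theorem toList_wb : wb.toList = [AB.b] := rfl

theorem mul_a2_mul_ne_pow_ab2 (n : ℕ) (p s : Word) : p * (wa ^ 2 * s) ≠ (wa * wb ^ 2) ^ n := by
  intro h
  induction n generalizing p with
  | zero =>
    apply_fun toList at h
    simp [pow_two] at h
  | succ n ih =>
    obtain ⟨l, rfl⟩ := ofList.surjective p
    rw [pow_succ' (wa * wb ^ 2)] at h
    apply_fun toList at h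
    rcases l with _ | ⟨x, _ | ⟨y, _ | ⟨z, l⟩⟩⟩ <;> simp [pow_two] at h
    exact ih (ofList l) (toList.injective (by simpa [pow_two] using h.2.2.2))

theorem exists_left_eq_pow_of_mul_a2_mul_eq_pow_a2b {n : ℕ} {p s : Word}
    (h : p * (wa ^ 2 * s) = (wa ^ 2 * wb) ^ n) : ∃ j, p = (wa ^ 2 * wb) ^ j := by
  induction n generalizing p with
  | zero =>
    apply_fun toList at h
    simp [pow_two] at h
  | succ n ih =>
    obtain ⟨l, rfl⟩ := ofList.surjective p
    rw [pow_succ' (wa ^ 2 * wb)] at h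
    apply_fun toList at h
    rcases l with _ | ⟨x, _ | ⟨y, _ | ⟨z, l⟩⟩⟩
    · exact ⟨0, rfl⟩
    all_goals simp [pow_two] at h
    obtain ⟨rfl, rfl, rfl, h⟩ := h
    obtain ⟨j, hj⟩ := ih (p := ofList l) (toList.injective (by simpa [pow_two] using h))
    exact ⟨j + 1, by rw [pow_succ', ← hj]; rfl⟩

theorem exists_factors_eq_pow_of_mul_a2_mul_eq_pow_a2b {n : ℕ} {p s : Word}
    (h : p * (wa ^ 2 * s) = (wa ^ 2 * wb) ^ n) :
    ∃ j t, p = (wa ^ 2 * wb) ^ j ∧ wa ^ 2 * s = (wa ^ 2 * wb) ^ t ∧ n = j + t := by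
  obtain ⟨j, rfl⟩ := exists_left_eq_pow_of_mul_a2_mul_eq_pow_a2b h
  obtain ⟨t, ht, rfl⟩ := exists_eq_pow_of_pow_mul_eq_pow (by simp [wb]) h
  exact ⟨j, t, rfl, ht, rfl⟩

theorem exists_pow_a2b_mul_a2_mul_eq_a2_mul (n : ℕ) (s : Word) :
    ∃ r, (wa ^ 2 * wb) ^ n * (wa ^ 2 * s) = wa ^ 2 * r := by
  cases n with
  | zero => exact ⟨s, one_mul _⟩
  | succ n =>
    exact ⟨wb * ((wa ^ 2 * wb) ^ n * (wa ^ 2 * s)), by rw [pow_succ']; simp only [mul_assoc]⟩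

theorem mul_pow_a2b_mul_a2_mul_mem_L1_iff (k : ℕ) (p s : Word) :
    p * ((wa ^ 2 * wb) ^ (2 * k) * (wa ^ 2 * s)) ∈ L1 ↔ p * (wa ^ 2 * s) ∈ L1 := by
  obtain ⟨r, hr⟩ := exists_pow_a2b_mul_a2_mul_eq_a2_mul (2 * k) s
  constructor
  · rintro (⟨m, hm⟩ | ⟨m, hm⟩)
    · rw [hr] at hm
      obtain ⟨j, t, rfl, ht, hjt⟩ := exists_factors_eq_pow_of_mul_a2_mul_eq_pow_a2b hm
      rw [← hr] at ht
      obtain ⟨t', hs, rfl⟩ := exists_eq_pow_of_pow_mul_eq_pow (by simp [wb]) ht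
      exact Or.inl ⟨m - k, by rw [hs, ← pow_add]; congr 1; omega⟩
    · exact absurd hm (hr ▸ mul_a2_mul_ne_pow_ab2 _ _ _)
  · rintro (⟨m, hm⟩ | ⟨m, hm⟩)
    · obtain ⟨j, t, rfl, hs, hjt⟩ := exists_factors_eq_pow_of_mul_a2_mul_eq_pow_a2b hm
      exact Or.inl ⟨m + k, by rw [hs, ← pow_add, ← pow_add]; congr 1; omega⟩
    · exact absurd hm (mul_a2_mul_ne_pow_ab2 _ _ _)

theorem mul_ab_ne_pow_ab2 (w : Word) (n : ℕ) : w * (wa * wb) ≠ (wa * wb ^ 2) ^ n := by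
  intro h
  cases n with
  | zero => simp [wb] at h
  | succ n =>
    rw [pow_succ, pow_two, ← mul_assoc, ← mul_assoc, ← mul_assoc] at h
    exact AB.noConfusion (eq_of_mul_of_eq_mul_of (mul_right_cancel h))

theorem synEq_a2ba_iff_general (w : Word) :
    SynEq L1 w (wa ^ 2 * wb * wa) ↔
      ∃ k : ℕ, w = (wa ^ 2 * wb) ^ (2 * k) * (wa ^ 2 * wb * wa) := by
  constructor
  · intro h
    have hab : w * (wa * wb) ∈ L1 := by
      simpa using (h 1 (wa * wb)).2
        (Or.inl ⟨1, by simp only [pow_two, one_mul, mul_one, mul_assoc]⟩)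
    rcases hab with ⟨_ | m, hm⟩ | ⟨m, hm⟩
    · simp [wb] at hm
    · refine ⟨m, mul_right_cancel (b := wa * wb) ?_⟩
      rw [hm, mul_add, pow_add]
      simp only [pow_two, mul_one, mul_assoc]
    · exact absurd hm (mul_ab_ne_pow_ab2 w (2 * m))
  · rintro ⟨k, rfl⟩ p q
    have key := mul_pow_a2b_mul_a2_mul_mem_L1_iff k p (wb * wa * q)
    simp only [← mul_assoc] at key ⊢
    exact key

/-- a nonempty word `w` is syntactically equivalent to `a²·b·a` with
respect to `L₁` if and only if `w = (a²·b)^(2k)·a²·b·a` for some `k : ℕ`. -/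
theorem synEq_a2ba_iff (w : Word) (hw : w ≠ 1) :
    SynEq L1 w (wa ^ 2 * wb * wa) ↔
      ∃ k : ℕ, w = (wa ^ 2 * wb) ^ (2 * k) * (wa ^ 2 * wb * wa) :=
  synEq_a2ba_iff_general w
end

section
/- Let L₁ = {(a²b)^{2k} : k ≥ 0} ∪ {(ab²)^{2k} : k ≥ 0} over the alphabet {a, b}. Then (ab²)³ is syntactically equivalent to ab² with respect to L₁, and (a²b)³ is syntactically equivalent to a²b with respect to L₁. -/
/-!
The words `a²b` and `ab²` are unbordered: no nonempty proper prefix is also a suffix. For such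
a word `u`, every occurrence of `u` in a power `uᵐ` is aligned, so `p uⁿ q = uᵐ` forces
`p = uⁱ`, `q = uʲ` with `i + n + j = m`. Hence whether `p uⁿ q` lies in `(u²)*` depends on `n`
only through its parity, which `u³` and `u` share. The other half of `L₁` never contains such a
word, because `aa` is not a factor of any `(ab²)ᵐ` and `bb` is not a factor of any `(a²b)ᵐ`.
-/

open Submonoid

theorem exists_pow_of_mul_eq_pow {M : Type*} [CancelMonoid M] [Subsingleton Mˣ] {u q : M}
    (hu : u ≠ 1) {m : ℕ} (h : u * q = u ^ m) : ∃ j, q = u ^ j ∧ j + 1 = m := by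
  cases m with
  | zero => exact absurd (mul_eq_one'.1 (h.trans (pow_zero u))).1 hu
  | succ m => exact ⟨m, mul_left_cancel (h.trans (pow_succ' u m)), rfl⟩

namespace FreeMonoid

variable {α : Type*}

theorem mul_eq_mul_iff {a b c d : FreeMonoid α} :
    a * b = c * d ↔ (∃ t, c = a * t ∧ b = t * d) ∨ ∃ t, a = c * t ∧ d = t * b :=
  List.append_eq_append_iff

theorem mul_mul_ne_of_isChain {R : α → α → Prop} {u w : FreeMonoid α}
    (hw : w.toList.IsChain R) (hu : ¬u.toList.IsChain R) (p q : FreeMonoid α) : p * u * q ≠ w :=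
  fun h => hu (hw.infix ⟨p.toList, q.toList, by rw [← h]; rfl⟩)

def Unbordered (u : FreeMonoid α) : Prop :=
  ∀ t, t <+: u.toList → t <:+ u.toList → t = [] ∨ t = u.toList

theorem unbordered_iff {u : FreeMonoid α} :
    u.Unbordered ↔ ∀ t ∈ u.toList.inits, t ∈ u.toList.tails → t = [] ∨ t = u.toList := by
  simp only [Unbordered, List.mem_inits, List.mem_tails]

namespace Unbordered

variable {u : FreeMonoid α}

theorem eq_one_or_eq_one (hu : u.Unbordered) {p t s : FreeMonoid α} (hpt : u = p * t)
    (hts : u = t * s) : p = 1 ∨ t = 1 := by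
  rcases hu t.toList ⟨s.toList, hts.symm⟩ ⟨p.toList, hpt.symm⟩ with ht | ht
  · exact Or.inr ht
  · refine Or.inl (mul_right_cancel (b := t) ?_)
    rw [one_mul, ← hpt]
    exact ht.symm

theorem exists_pow_of_mul_mul_eq_pow (hu : u.Unbordered) (hu1 : u ≠ 1) {p q : FreeMonoid α}
    {m : ℕ} (h : p * u * q = u ^ m) : ∃ i j, p = u ^ i ∧ q = u ^ j ∧ i + 1 + j = m := by
  induction m generalizing p q with
  | zero => exact absurd (mul_eq_one'.1 (mul_eq_one'.1 h).1).2 hu1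
  | succ m ih =>
    by_cases hp : p = 1
    · subst hp
      obtain ⟨j, rfl, hj⟩ := exists_pow_of_mul_eq_pow hu1 (by rwa [one_mul] at h)
      exact ⟨0, j, rfl, rfl, by omega⟩
    rw [mul_assoc, pow_succ', mul_eq_mul_iff] at h
    rcases h with ⟨t, hpt, h⟩ | ⟨t, rfl, h⟩
    · rcases mul_eq_mul_iff.1 h with ⟨s, rfl, -⟩ | ⟨s, hts, hs⟩
      · refine absurd (length_eq_zero.1 ?_) hp
        have := congrArg length hpt
        simp only [length_mul] at this
        omega
      · -- `t` is a border of `u`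
        obtain rfl : t = 1 := (hu.eq_one_or_eq_one hpt hts).resolve_left hp
        rw [one_mul] at hts
        rw [mul_one] at hpt
        subst hpt hts
        obtain ⟨j, rfl, hj⟩ := exists_pow_of_mul_eq_pow hu1 hs.symm
        exact ⟨1, j, (pow_one u).symm, rfl, by omega⟩
    · obtain ⟨i, j, rfl, rfl, hm⟩ := ih (by rw [h, mul_assoc])
      exact ⟨i + 1, j, (pow_succ' u i).symm, rfl, by omega⟩

theorem exists_pow_of_mul_pow_mul_eq_pow (hu : u.Unbordered) (hu1 : u ≠ 1)
    {p q : FreeMonoid α} {n m : ℕ} (h : p * u ^ (n + 1) * q = u ^ m) :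
    ∃ i j, p = u ^ i ∧ q = u ^ j ∧ i + (n + 1) + j = m := by
  induction n generalizing q with
  | zero => simpa using hu.exists_pow_of_mul_mul_eq_pow hu1 (by simpa using h)
  | succ n ih =>
    obtain ⟨i, k, rfl, hk, hm⟩ := ih (q := u * q) <| by
      rw [← h, pow_succ u (n + 1)]
      simp only [mul_assoc]
    obtain ⟨j, rfl, hj⟩ := exists_pow_of_mul_eq_pow hu1 hk
    exact ⟨i, j, rfl, rfl, by omega⟩

theorem mul_pow_mul_mem_powers_sq_iff (hu : u.Unbordered) (hu1 : u ≠ 1)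
    {p q : FreeMonoid α} {n : ℕ} :
    p * u ^ (n + 1) * q ∈ powers (u ^ 2) ↔
      ∃ i j, p = u ^ i ∧ q = u ^ j ∧ Even (i + (n + 1) + j) := by
  simp only [mem_powers_iff, ← pow_mul, eq_comm (b := p * _ * q)]
  constructor
  · rintro ⟨k, hk⟩
    obtain ⟨i, j, rfl, rfl, hm⟩ := hu.exists_pow_of_mul_pow_mul_eq_pow hu1 hk
    exact ⟨i, j, rfl, rfl, ⟨k, by omega⟩⟩
  · rintro ⟨i, j, rfl, rfl, k, hk⟩
    exact ⟨k, by rw [← pow_add, ← pow_add, hk, two_mul]⟩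

end Unbordered

end FreeMonoid

open FreeMonoid

theorem synEq_pow_three_of_unbordered {u v : Word} (hu : u.Unbordered) (hu1 : u ≠ 1)
    (huv : ∀ p q m, p * u * q ≠ v ^ m) :
    SynEq (powers (u ^ 2) ∪ powers (v ^ 2)) (u ^ 3) u := by
  intro p q
  have hv3 : p * u ^ 3 * q ∉ powers (v ^ 2) := by
    rintro ⟨k, hk : (v ^ 2) ^ k = _⟩
    refine huv p (u ^ 2 * q) (2 * k) ?_
    rw [pow_mul, hk, (pow_succ' u 2 : u ^ 3 = _)]
    simp only [mul_assoc]
  have hv1 : p * u * q ∉ powers (v ^ 2) := by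
    rintro ⟨k, hk : (v ^ 2) ^ k = _⟩
    exact huv p q (2 * k) (by rw [pow_mul, hk])
  simp only [Set.mem_union, SetLike.mem_coe, hv1, hv3, or_false]
  have hmem := hu.mul_pow_mul_mem_powers_sq_iff hu1 (p := p) (q := q) (n := 0)
  rw [zero_add, pow_one] at hmem
  rw [hu.mul_pow_mul_mem_powers_sq_iff hu1 (n := 2), hmem]
  refine exists₂_congr fun i j => and_congr_right' <| and_congr_right' ?_
  rw [show i + (2 + 1) + j = i + 1 + j + 2 by omega]
  simp [Nat.even_add]

theorem toList_aab : (wa ^ 2 * wb).toList = [.a, .a, .b] := rfl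

theorem toList_abb : (wa * wb ^ 2).toList = [.a, .b, .b] := rfl

theorem unbordered_aab : (wa ^ 2 * wb).Unbordered :=
  unbordered_iff.2 (by rw [toList_aab]; simp)

theorem unbordered_abb : (wa * wb ^ 2).Unbordered :=
  unbordered_iff.2 (by rw [toList_abb]; simp)

theorem isChain_toList_pow_aab (m : ℕ) :
    ((wa ^ 2 * wb) ^ m).toList.IsChain (fun x y => x = .a ∨ y = .a) := by
  induction m with
  | zero => exact .nil
  | succ m ih =>
    rw [pow_succ, toList_mul, List.isChain_append, toList_aab]
    simp [ih]

theorem isChain_toList_pow_abb (m : ℕ) :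
    ((wa * wb ^ 2) ^ m).toList.IsChain (fun x y => x = .b ∨ y = .b) := by
  induction m with
  | zero => exact .nil
  | succ m ih =>
    rw [pow_succ', toList_mul, List.isChain_append, toList_abb]
    simp [ih]

theorem L1_eq : L1 = (powers ((wa ^ 2 * wb) ^ 2) : Set Word) ∪ powers ((wa * wb ^ 2) ^ 2) := by
  ext w
  simp [L1, mem_powers_iff, pow_mul, eq_comm]

/-- `(ab²)³ ~_{L₁} ab²` and `(a²b)³ ~_{L₁} a²b`. -/
theorem synEq_cubes :
    SynEq L1 ((wa * wb ^ 2) ^ 3) (wa * wb ^ 2) ∧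
    SynEq L1 ((wa ^ 2 * wb) ^ 3) (wa ^ 2 * wb) := by
  rw [L1_eq]
  constructor
  · rw [Set.union_comm]
    refine synEq_pow_three_of_unbordered unbordered_abb
      (fun h => List.cons_ne_nil _ _ (congrArg toList h)) fun p q m => ?_
    refine mul_mul_ne_of_isChain (isChain_toList_pow_aab m) ?_ p q
    rw [toList_abb]
    simp
  · refine synEq_pow_three_of_unbordered unbordered_aab
      (fun h => List.cons_ne_nil _ _ (congrArg toList h)) fun p q m => ?_
    refine mul_mul_ne_of_isChain (isChain_toList_pow_abb m) ?_ p q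
    rw [toList_aab]
    simp
end

section
/- Let L₂ = {aᵐ·bⁿ·a² : m ≥ 3, n ≥ 1} over the alphabet {a, b}. For every word w ∈ L₂ and all (possibly empty) words p, q over {a, b}: p·w·q ∈ L₂ if and only if p = aⁱ for some i ≥ 0 and q is the empty word. -/
/-- The language `L₂ = a²a⁺b⁺a² = {aᵐ·bⁿ·a² : m ≥ 3, n ≥ 1}`. -/
def L2 : Set Word :=
  {w | ∃ m n : ℕ, 3 ≤ m ∧ 1 ≤ n ∧ w = wa ^ m * wb ^ n * wa ^ 2}

/-!
The word `aᴹ bᴺ a²` carries the letter `b` exactly at the positions `M ≤ i < M + N`. If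
`p · aᵐ bⁿ a² · q = aᴹ bᴺ a²`, the letters at positions `|p|`, `|p| + m + n - 1` and `|p| + m + n`
are `a`, `b`, `a`; so the `b`-block of `w` must end exactly where that of `aᴹ bᴺ a²` ends, which
leaves no room for `q`, and `p` lies inside the leading run of `a`'s.
-/

theorem FreeMonoid.toList_of_pow {α : Type*} (x : α) (k : ℕ) :
    (FreeMonoid.of x ^ k).toList = List.replicate k x := by
  induction k with
  | zero => rfl
  | succ k ih => rw [pow_succ, toList_mul, ih, toList_of, List.replicate_succ']

theorem FreeMonoid.getElem?_toList_mul_mul {α : Type*} (p u q : FreeMonoid α) {i : ℕ}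
    (hi : i < u.toList.length) :
    (p * u * q).toList[p.toList.length + i]? = u.toList[i]? := by
  rw [toList_mul, toList_mul, List.append_assoc, List.getElem?_append_right (by omega),
    Nat.add_sub_cancel_left, List.getElem?_append_left hi]

theorem toList_wa_pow_wb_pow_wa_sq (M N : ℕ) :
    (wa ^ M * wb ^ N * wa ^ 2).toList =
      List.replicate M AB.a ++ List.replicate N AB.b ++ List.replicate 2 AB.a := by
  simp only [FreeMonoid.toList_mul, wa, wb, FreeMonoid.toList_of_pow]

theorem length_toList_wa_pow_wb_pow_wa_sq (M N : ℕ) :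
    (wa ^ M * wb ^ N * wa ^ 2).toList.length = M + N + 2 := by
  rw [toList_wa_pow_wb_pow_wa_sq]
  simp only [List.length_append, List.length_replicate]

theorem getElem?_toList_wa_pow_wb_pow_wa_sq {M N i : ℕ} (hi : i < M + N + 2) :
    (wa ^ M * wb ^ N * wa ^ 2).toList[i]? =
      some (if M ≤ i ∧ i < M + N then AB.b else AB.a) := by
  rw [toList_wa_pow_wb_pow_wa_sq, List.getElem?_append, List.getElem?_append]
  simp only [List.length_append, List.length_replicate, List.getElem?_replicate]
  split_ifs <;> first | rfl | omega

theorem take_toList_wa_pow_wb_pow_wa_sq {M N l : ℕ} (hl : l ≤ M) :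
    (wa ^ M * wb ^ N * wa ^ 2).toList.take l = List.replicate l AB.a := by
  rw [toList_wa_pow_wb_pow_wa_sq, List.append_assoc, List.take_append_of_le_length (by simpa),
    List.take_replicate, min_eq_left hl]

/-- for `w ∈ L₂` and all (possibly empty) words `p, q`,
`p·w·q ∈ L₂` if and only if `p = aⁱ` for some `i ≥ 0` and `q` is the empty word. -/
theorem contexts_of_L2 (w : Word) (hw : w ∈ L2) (p q : Word) :
    p * w * q ∈ L2 ↔ (∃ i : ℕ, p = wa ^ i) ∧ q = 1 := by
  obtain ⟨m, n, hm, hn, rfl⟩ := hw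
  constructor
  · rintro ⟨M, N, -, -, hpwq⟩
    have hlen : p.toList.length + (m + n + 2) + q.toList.length = M + N + 2 := by
      have h := congrArg (·.toList.length) hpwq
      simp only [FreeMonoid.toList_mul, List.length_append,
        ← length_toList_wa_pow_wb_pow_wa_sq] at h ⊢
      omega
    have b_positions (i : ℕ) (hi : i < m + n + 2) :
        (M ≤ p.toList.length + i ∧ p.toList.length + i < M + N) ↔ (m ≤ i ∧ i < m + n) := by
      have h := FreeMonoid.getElem?_toList_mul_mul p _ q
        (by rwa [length_toList_wa_pow_wb_pow_wa_sq])
      rw [hpwq, getElem?_toList_wa_pow_wb_pow_wa_sq (by omega),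
        getElem?_toList_wa_pow_wb_pow_wa_sq hi] at h
      split_ifs at h <;> simp only [Option.some.injEq, reduceCtorEq] at h <;> tauto
    have h₀ := b_positions 0 (by omega)
    have h₁ := b_positions (m + n - 1) (by omega)
    have h₂ := b_positions (m + n) (by omega)
    have hq : q.toList.length = 0 := by omega
    have hp : p.toList.length < M := by omega
    refine ⟨⟨p.toList.length, FreeMonoid.toList.injective ?_⟩, FreeMonoid.length_eq_zero.mp hq⟩
    rw [wa, FreeMonoid.toList_of_pow, ← take_toList_wa_pow_wb_pow_wa_sq hp.le, ← hpwq]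
    simp [mul_assoc]
  · rintro ⟨⟨i, rfl⟩, rfl⟩
    exact ⟨i + m, n, by omega, hn, by simp [pow_add, mul_assoc]⟩
end

section
/- Let L₃ = {(a²b)ᵐ·(ab²)ⁿ·(a²b)² : m ≥ 3, n ≥ 1} over the alphabet {a, b}. For every word w ∈ L₃ and all (possibly empty) words p, q over {a, b}: p·w·q ∈ L₃ if and only if p = (a²b)ⁱ for some i ≥ 0 and q is the empty word. -/
/-- The language `L₃ = (a²b)²(a²b)⁺(ab²)⁺(a²b)² = {(a²b)ᵐ·(ab²)ⁿ·(a²b)² : m ≥ 3, n ≥ 1}`. -/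
def L3 : Set Word :=
  {w | ∃ m n : ℕ, 3 ≤ m ∧ 1 ≤ n ∧
    w = (wa ^ 2 * wb) ^ m * (wa * wb ^ 2) ^ n * (wa ^ 2 * wb) ^ 2}

def gapWord (l : List ℕ) : Word := (l.map fun g => wa ^ g * wb).prod

@[simp] lemma gapWord_nil : gapWord [] = 1 := rfl

@[simp] lemma gapWord_cons (g : ℕ) (l : List ℕ) :
    gapWord (g :: l) = wa ^ g * wb * gapWord l := by
  simp [gapWord]

@[simp] lemma gapWord_append (l₁ l₂ : List ℕ) :
    gapWord (l₁ ++ l₂) = gapWord l₁ * gapWord l₂ := by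
  simp [gapWord]

lemma wa_pow_mul_gapWord_cons (j g : ℕ) (l : List ℕ) :
    wa ^ j * gapWord (g :: l) = gapWord ((j + g) :: l) := by
  simp only [gapWord_cons, pow_add, mul_assoc]

lemma exists_eq_gapWord_mul_wa_pow (w : Word) : ∃ l t, w = gapWord l * wa ^ t := by
  induction w using FreeMonoid.inductionOn' with
  | one => exact ⟨[], 0, by simp⟩
  | of_mul x w ih =>
    obtain ⟨l, t, rfl⟩ := ih
    cases x with
    | b => exact ⟨0 :: l, t, by simp [wb, mul_assoc]⟩
    | a =>
      cases l with
      | nil => exact ⟨[], t + 1, by simp [wa, pow_succ']⟩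
      | cons g l =>
        refine ⟨(1 + g) :: l, t, ?_⟩
        rw [← wa_pow_mul_gapWord_cons, pow_one, wa, mul_assoc]

@[simp] lemma toList_wa_pow (t : ℕ) : (wa ^ t).toList = List.replicate t AB.a := by
  induction t with
  | zero => rfl
  | succ t ih => rw [pow_succ, FreeMonoid.toList_mul, ih, List.replicate_succ']; rfl

lemma wa_pow_mul_wb_mul_inj {g h : ℕ} {x y : Word} (e : wa ^ g * wb * x = wa ^ h * wb * y) :
    g = h ∧ x = y := by
  induction g generalizing h with
  | zero =>
    cases h with
    | zero => simpa [mul_assoc] using e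
    | succ h => simpa [pow_succ', mul_assoc, wa, wb] using congrArg (·.toList.head?) e
  | succ g ih =>
    cases h with
    | zero => simpa [pow_succ', mul_assoc, wa, wb] using congrArg (·.toList.head?) e
    | succ h =>
      simp only [pow_succ', mul_assoc, mul_right_inj] at e
      simpa using ih (by simpa only [mul_assoc] using e)

lemma gapWord_mul_wa_pow_inj {l₁ l₂ : List ℕ} {t₁ t₂ : ℕ}
    (e : gapWord l₁ * wa ^ t₁ = gapWord l₂ * wa ^ t₂) : l₁ = l₂ ∧ t₁ = t₂ := by
  induction l₁ generalizing l₂ with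
  | nil =>
    cases l₂ with
    | nil => simpa using congrArg (·.toList.length) e
    | cons h l₂ => simpa [wb] using congrArg (AB.b ∈ ·.toList) e
  | cons g l₁ ih =>
    cases l₂ with
    | nil => simpa [wb] using congrArg (AB.b ∈ ·.toList) e
    | cons h l₂ =>
      simp only [gapWord_cons, mul_assoc] at e
      obtain ⟨rfl, e_tail⟩ := wa_pow_mul_wb_mul_inj (by simpa only [mul_assoc] using e)
      simpa using ih e_tail

lemma List.cons_suffix_of_cons_suffix_replicate_append {α : Type*} {a b : α} {s l : List α}
    (hab : b ≠ a) {M : ℕ} (h : b :: s <:+ List.replicate M a ++ l) : b :: s <:+ l := by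
  induction M with
  | zero => simpa using h
  | succ M ih =>
    rcases List.suffix_cons_iff.1 h with h | h
    · exact absurd (List.cons.inj h).1 hab
    · exact ih h

def abbGaps (n : ℕ) : List ℕ := (List.replicate n [1, 0]).flatten

@[simp] lemma abbGaps_zero : abbGaps 0 = [] := rfl

lemma abbGaps_succ (n : ℕ) : abbGaps (n + 1) = 1 :: 0 :: abbGaps n := by
  simp [abbGaps, List.replicate_succ]

lemma abbGaps_succ' (n : ℕ) : abbGaps (n + 1) = abbGaps n ++ [1, 0] := by
  simp [abbGaps, List.replicate_succ']

lemma eq_of_suffix_abbGaps_append {N : ℕ} {s : List ℕ} (h : 0 :: 2 :: s <:+ abbGaps N ++ [2, 2]) :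
    s = [2] := by
  induction N with
  | zero =>
    obtain rfl : s = [] := by simpa using h.length_le
    exact absurd h (by decide)
  | succ N ih =>
    rw [abbGaps_succ] at h
    rcases List.suffix_cons_iff.1 h with h | h
    · simp at h
    rcases List.suffix_cons_iff.1 h with h | h
    · cases N with
      | zero => simpa using h
      | succ N => simp [abbGaps_succ] at h
    · exact ih h

lemma append_two_abbGaps_inj {A B : List ℕ} {n N : ℕ}
    (h : A ++ 2 :: abbGaps n = B ++ 2 :: abbGaps N) : A = B ∧ n = N := by
  induction n generalizing N with
  | zero =>
    cases N with
    | zero => simpa [abbGaps] using h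
    | succ N =>
      have h' : A ++ [2] = (B ++ 2 :: abbGaps N ++ [1]) ++ [0] := by simpa [abbGaps_succ'] using h
      exact absurd (List.append_singleton_inj.1 h').2 (by decide)
  | succ n ih =>
    cases N with
    | zero =>
      have h' : (A ++ 2 :: abbGaps n ++ [1]) ++ [0] = B ++ [2] := by simpa [abbGaps_succ'] using h
      exact absurd (List.append_singleton_inj.1 h').2 (by decide)
    | succ N =>
      rw [abbGaps_succ', abbGaps_succ', ← List.cons_append, ← List.cons_append,
        ← List.append_assoc, ← List.append_assoc, List.append_cancel_right_eq] at h
      simpa using ih h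

def l3Gaps (m n : ℕ) : List ℕ := List.replicate m 2 ++ abbGaps n ++ [2, 2]

lemma l3Gaps_succ (m n : ℕ) : l3Gaps (m + 1) n = 2 :: l3Gaps m n := rfl

lemma gapWord_replicate_two (m : ℕ) : gapWord (List.replicate m 2) = (wa ^ 2 * wb) ^ m := by
  simp [gapWord]

lemma gapWord_abbGaps (n : ℕ) : gapWord (abbGaps n) = (wa * wb ^ 2) ^ n := by
  induction n with
  | zero => rfl
  | succ n ih => simp [abbGaps_succ', ih, pow_succ, mul_assoc]

lemma gapWord_l3Gaps (m n : ℕ) :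
    gapWord (l3Gaps m n) = (wa ^ 2 * wb) ^ m * (wa * wb ^ 2) ^ n * (wa ^ 2 * wb) ^ 2 := by
  simp [l3Gaps, gapWord_replicate_two, gapWord_abbGaps, sq, mul_assoc]

lemma eq_replicate_of_append_cons_l3Gaps_append {x y : List ℕ} {j m n M N : ℕ}
    (hm : 1 ≤ m) (hn : 1 ≤ n) (hM : 1 ≤ M) (h : x ++ j :: l3Gaps m n ++ y = l3Gaps M N) :
    x = List.replicate x.length 2 ∧ j = 2 ∧ y = [] := by
  obtain ⟨m, rfl⟩ : ∃ m', m = m' + 1 := ⟨m - 1, by omega⟩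
  obtain ⟨n, rfl⟩ : ∃ n', n = n' + 1 := ⟨n - 1, by omega⟩
  obtain ⟨M, rfl⟩ : ∃ M', M = M' + 1 := ⟨M - 1, by omega⟩
  obtain rfl : y = [] := by
    have hsuf : 0 :: 2 :: 2 :: y <:+ List.replicate (M + 1) 2 ++ (abbGaps N ++ [2, 2]) := by
      rw [← List.append_assoc, ← l3Gaps, ← h]
      exact ⟨x ++ j :: List.replicate (m + 1) 2 ++ abbGaps n ++ [1], by
        simp [l3Gaps, abbGaps_succ']⟩
    simpa using eq_of_suffix_abbGaps_append
      (List.cons_suffix_of_cons_suffix_replicate_append (by decide) hsuf)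
  have h' : (x ++ j :: List.replicate m 2) ++ 2 :: abbGaps (n + 1) =
      List.replicate M 2 ++ 2 :: abbGaps N := by
    apply List.append_cancel_right (bs := [2, 2])
    simpa [l3Gaps, List.replicate_succ'] using h
  have hx : x ++ j :: List.replicate m 2 = List.replicate M 2 := (append_two_abbGaps_inj h').1
  have hall : ∀ g, g ∈ x ∨ g = j → g = 2 := fun g hg =>
    List.eq_of_mem_replicate (by rw [← hx]; simp only [List.mem_append, List.mem_cons]; tauto)
  exact ⟨List.eq_replicate_length.2 fun g hg => hall g (.inl hg), hall j (.inr rfl), rfl⟩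

/-- for `w ∈ L₃` and all (possibly empty) words `p, q`,
`p·w·q ∈ L₃` iff `p = (a²b)ⁱ` for some `i ≥ 0` and `q` is the empty word. -/
theorem contexts_of_L3 (w : Word) (hw : w ∈ L3) (p q : Word) :
    p * w * q ∈ L3 ↔ (∃ i : ℕ, p = (wa ^ 2 * wb) ^ i) ∧ q = 1 := by
  obtain ⟨m, n, hm, hn, rfl⟩ := hw
  constructor
  · rintro ⟨M, N, hM, -, h⟩
    obtain ⟨lp, jp, rfl⟩ := exists_eq_gapWord_mul_wa_pow p
    obtain ⟨lq, tq, rfl⟩ := exists_eq_gapWord_mul_wa_pow q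
    obtain ⟨m, rfl⟩ : ∃ m', m = m' + 1 := ⟨m - 1, by omega⟩
    have hpwq : gapWord lp * wa ^ jp * gapWord (l3Gaps (m + 1) n) * (gapWord lq * wa ^ tq) =
        gapWord (lp ++ (jp + 2) :: l3Gaps m n ++ lq) * wa ^ tq := by
      rw [l3Gaps_succ, mul_assoc (gapWord lp), wa_pow_mul_gapWord_cons]
      simp only [gapWord_append, mul_assoc]
    rw [← gapWord_l3Gaps, ← gapWord_l3Gaps, ← mul_one (gapWord (l3Gaps M N)), ← pow_zero wa,
      hpwq] at h
    obtain ⟨hlist, rfl⟩ := gapWord_mul_wa_pow_inj h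
    obtain ⟨hlp, hjp, rfl⟩ :=
      eq_replicate_of_append_cons_l3Gaps_append (by omega) hn (by omega) hlist
    obtain rfl : jp = 0 := by omega
    refine ⟨⟨lp.length, ?_⟩, by simp⟩
    rw [hlp, pow_zero, mul_one, gapWord_replicate_two, List.length_replicate]
  · rintro ⟨⟨i, rfl⟩, rfl⟩
    exact ⟨i + m, n, by omega, hn, by simp only [mul_one, pow_add, mul_assoc]⟩
end

section
/- Let L₃ = {(a²b)ᵐ·(ab²)ⁿ·(a²b)² : m ≥ 3, n ≥ 1} over the alphabet {a, b}. Then L₃ is a single syntactic class: for every w ∈ L₃ and every nonempty word w' over {a, b}, w' is syntactically equivalent to w with respect to L₃ if and only if w' ∈ L₃. -/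
/- ### auxiliary development -/

inductive St : Type
  | s0|s1|s2|s3|s4|s5|s6|s7|s8|s9|s10|s11|s12|s13|s14|s15|s16|s17|s18|s19|s20|sD
  deriving DecidableEq

instance : Fintype St :=
  ⟨⟨↑[St.s0, St.s1, St.s2, St.s3, St.s4, St.s5, St.s6, St.s7, St.s8, St.s9, St.s10, St.s11,
      St.s12, St.s13, St.s14, St.s15, St.s16, St.s17, St.s18, St.s19, St.s20, St.sD], by decide⟩,
    by intro x; cases x <;> decide⟩

open St AB

def step : St → AB → St
  | s0, a => s1
  | s1, a => s2
  | s2, b => s3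
  | s3, a => s4
  | s4, a => s5
  | s5, b => s6
  | s6, a => s7
  | s7, a => s8
  | s8, b => s9
  | s9, a => s10
  | s10, a => s11
  | s10, b => s12
  | s11, b => s9
  | s12, b => s13
  | s13, a => s14
  | s14, a => s16
  | s14, b => s15
  | s15, b => s13
  | s16, b => s17
  | s17, a => s18
  | s18, a => s19
  | s19, b => s20
  | _, _ => sD

def run (x : Word) (s : St) : St := x.toList.foldl step s

lemma run_mul (x y : Word) (s : St) : run (x * y) s = run y (run x s) := by
  simp [run, List.foldl_append]

lemma run_of (c : AB) (s : St) : run (FreeMonoid.of c) s = step s c := by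
  simp [run]

lemma run_one (s : St) : run 1 s = s := rfl

notation "X" => (wa ^ 2 * wb : Word)
notation "Y" => (wa * wb ^ 2 : Word)

lemma run_X (s : St) : run X s = step (step (step s a) a) b := by
  simp [sq, run_mul, run_of, wa, wb]

lemma run_Y (s : St) : run Y s = step (step (step s a) b) b := by
  simp [sq, run_mul, run_of, wa, wb]


def InvP : St → Word → Prop
  | s0, x => x = 1
  | s1, x => x = wa
  | s2, x => x = wa * wa
  | s3, x => x = X
  | s4, x => x = X * wa
  | s5, x => x = X * wa * wa
  | s6, x => x = X ^ 2
  | s7, x => x = X ^ 2 * wa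
  | s8, x => x = X ^ 2 * wa * wa
  | s9, x => ∃ m : ℕ, 3 ≤ m ∧ x = X ^ m
  | s10, x => ∃ m : ℕ, 3 ≤ m ∧ x = X ^ m * wa
  | s11, x => ∃ m : ℕ, 3 ≤ m ∧ x = X ^ m * wa * wa
  | s12, x => ∃ m : ℕ, 3 ≤ m ∧ x = X ^ m * wa * wb
  | s13, x => ∃ m n : ℕ, 3 ≤ m ∧ 1 ≤ n ∧ x = X ^ m * Y ^ n
  | s14, x => ∃ m n : ℕ, 3 ≤ m ∧ 1 ≤ n ∧ x = X ^ m * Y ^ n * wa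
  | s15, x => ∃ m n : ℕ, 3 ≤ m ∧ 1 ≤ n ∧ x = X ^ m * Y ^ n * wa * wb
  | s16, x => ∃ m n : ℕ, 3 ≤ m ∧ 1 ≤ n ∧ x = X ^ m * Y ^ n * wa * wa
  | s17, x => ∃ m n : ℕ, 3 ≤ m ∧ 1 ≤ n ∧ x = X ^ m * Y ^ n * X
  | s18, x => ∃ m n : ℕ, 3 ≤ m ∧ 1 ≤ n ∧ x = X ^ m * Y ^ n * X * wa
  | s19, x => ∃ m n : ℕ, 3 ≤ m ∧ 1 ≤ n ∧ x = X ^ m * Y ^ n * X * wa * wa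
  | s20, x => x ∈ L3
  | sD, _ => True

lemma invP_step (s : St) (c : AB) (x : Word) (h : InvP s x) :
    InvP (step s c) (x * FreeMonoid.of c) := by
  cases s <;> cases c <;>
    simp only [InvP, step] at h ⊢ <;>
    try trivial
  · rw [h]; exact (one_mul _)
  · rw [h]; rfl
  · rw [h]; simp [sq, wa, wb, mul_assoc]
  · rw [h]; rfl
  · rw [h]; rfl
  · rw [h]; simp [sq, wa, wb, mul_assoc]
  · rw [h]; rfl
  · rw [h]; rfl
  · exact ⟨3, le_refl 3, by rw [h]; simp [pow_succ, sq, wa, wb, mul_assoc]⟩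
  · obtain ⟨m, hm, rfl⟩ := h; exact ⟨m, hm, rfl⟩
  · obtain ⟨m, hm, rfl⟩ := h; exact ⟨m, hm, rfl⟩
  · obtain ⟨m, hm, rfl⟩ := h; exact ⟨m, hm, rfl⟩
  · obtain ⟨m, hm, rfl⟩ := h
    exact ⟨m + 1, le_trans hm (Nat.le_succ m), by simp [pow_succ, sq, wa, wb, mul_assoc]⟩
  · obtain ⟨m, hm, rfl⟩ := h
    exact ⟨m, 1, hm, le_refl 1, by simp [sq, wa, wb, mul_assoc]⟩
  · obtain ⟨m, n, hm, hn, rfl⟩ := h; exact ⟨m, n, hm, hn, rfl⟩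
  · obtain ⟨m, n, hm, hn, rfl⟩ := h; exact ⟨m, n, hm, hn, rfl⟩
  · obtain ⟨m, n, hm, hn, rfl⟩ := h; exact ⟨m, n, hm, hn, rfl⟩
  · obtain ⟨m, n, hm, hn, rfl⟩ := h
    exact ⟨m, n + 1, hm, le_trans hn (Nat.le_succ n), by simp [pow_succ, sq, wa, wb, mul_assoc]⟩
  · obtain ⟨m, n, hm, hn, rfl⟩ := h
    exact ⟨m, n, hm, hn, by simp [sq, wa, wb, mul_assoc]⟩
  · obtain ⟨m, n, hm, hn, rfl⟩ := h; exact ⟨m, n, hm, hn, rfl⟩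
  · obtain ⟨m, n, hm, hn, rfl⟩ := h; exact ⟨m, n, hm, hn, rfl⟩
  · obtain ⟨m, n, hm, hn, rfl⟩ := h
    exact ⟨m, n, hm, hn, by simp [pow_succ, sq, wa, wb, mul_assoc]⟩

lemma inv_run_list : ∀ l : List AB, InvP (l.foldl step s0) (FreeMonoid.ofList l) := by
  intro l
  induction l using List.reverseRecOn with
  | nil => rfl
  | append_singleton l c ih =>
      rw [List.foldl_append]
      have : FreeMonoid.ofList (l ++ [c]) = FreeMonoid.ofList l * FreeMonoid.of c := rfl
      rw [this]
      exact invP_step _ _ _ ih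

lemma inv_run (x : Word) : InvP (run x s0) x := by
  have h := inv_run_list x.toList
  simpa [run] using h

def stepX (s : St) : St := step (step (step s a) a) b
def stepY (s : St) : St := step (step (step s a) b) b

lemma run_X' (s : St) : run X s = stepX s := run_X s
lemma run_Y' (s : St) : run Y s = stepY s := run_Y s

lemma run_pow (x : Word) (k : ℕ) (s : St) : run (x ^ (k + 1)) s = run x (run (x ^ k) s) := by
  rw [pow_succ, run_mul]

lemma runX_pow (m : ℕ) (hm : 3 ≤ m) (s : St) :
    run (X ^ m) s = stepX (stepX (stepX s)) := by
  induction m, hm using Nat.le_induction with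
  | base =>
      rw [show (3 : ℕ) = 2 + 1 from rfl, run_pow, show (2 : ℕ) = 1 + 1 from rfl, run_pow,
        pow_one, run_X', run_X', run_X']
  | succ m hm ih =>
      rw [run_pow, ih, run_X']
      have : ∀ t : St, stepX (stepX (stepX (stepX t))) = stepX (stepX (stepX t)) := by decide
      exact this s

lemma runY_pow (n : ℕ) (hn : 1 ≤ n) (s : St) :
    run (Y ^ n) (stepX (stepX (stepX s))) = stepY (stepX (stepX (stepX s))) := by
  induction n, hn using Nat.le_induction with
  | base => rw [pow_one, run_Y']
  | succ n hn ih =>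
      rw [run_pow, ih, run_Y']
      have : ∀ t : St, stepY (stepY (stepX (stepX (stepX t)))) =
          stepY (stepX (stepX (stepX t))) := by decide
      exact this s

lemma run_mem_L3 (x : Word) (hx : x ∈ L3) (s : St) :
    run x s = stepX (stepX (stepY (stepX (stepX (stepX s))))) := by
  obtain ⟨m, n, hm, hn, rfl⟩ := hx
  rw [run_mul, run_mul, runX_pow m hm, runY_pow n hn,
    show (2 : ℕ) = 1 + 1 from rfl, run_pow, pow_one, run_X', run_X']

lemma memL3_iff (x : Word) : x ∈ L3 ↔ run x s0 = s20 := by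
  constructor
  · intro hx
    rw [run_mem_L3 x hx]
    rfl
  · intro hx
    have h := inv_run x
    rw [hx] at h
    exact h


/-- `L₃` is a single syntactic class: for `w ∈ L₃` and any nonempty
word `w'`, `w'` is syntactically equivalent to `w` with respect to `L₃` iff `w' ∈ L₃`. -/
theorem L3_single_syntactic_class (w : Word) (hw : w ∈ L3) (w' : Word) (hw' : w' ≠ 1) :
    SynEq L3 w' w ↔ w' ∈ L3 := by
  constructor
  · intro h
    have := h 1 1
    simpa using this.mpr (by simpa using hw)
  · intro h p q
    have hr : run (p * w' * q) s0 = run (p * w * q) s0 := by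
      rw [run_mul, run_mul, run_mul, run_mul, run_mem_L3 w' h, run_mem_L3 w hw]
    rw [memL3_iff, memL3_iff, hr]
end

section
/- Let S be a finite semigroup in which every element s satisfies s^{k+1} = s for some integer k ≥ 1 (i.e., S is completely regular). Then for all p, q ∈ S and every integer n ≥ 1 such that (q²p)ⁿ is idempotent, one has (q·p)·(q²·p)ⁿ = q·p. -/
/-!
Put `t = q²p` and `e = tⁿ`. Since `t^(m+1) = t` for some `m ≥ 1`, the element `t^m` is a right
identity for `t`, hence so is `(t^m)ⁿ = (tⁿ)^m = e`, idempotence collapsing `e^m` to `e`. Likewise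
`q^(k+1) = q` with `k ≥ 1` gives `qp = q^(k-1)·t`, so `qp·e = q^(k-1)·t·e = q^(k-1)·t = qp`.
The computation takes place in the monoid `WithOne S`, where powers are available.
-/


/-- The `n`-th power `sⁿ` of an element `s` of a semigroup, for `n ≥ 1`
(by convention `spow s 0 = s`, but this junk value is never used below). -/
def spow {S : Type*} [Semigroup S] (s : S) : ℕ → S
  | 0 => s
  | 1 => s
  | n + 2 => spow s (n + 1) * s

theorem WithOne.coe_spow {S : Type*} [Semigroup S] (s : S) :
    ∀ n : ℕ, ((spow s n : S) : WithOne S) = (s : WithOne S) ^ max n 1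
  | 0 => by simp [spow]
  | 1 => by simp [spow]
  | n + 2 => by
    rw [spow, WithOne.coe_mul, WithOne.coe_spow s (n + 1)]
    simp only [Nat.le_add_left, sup_of_le_left, pow_succ]

section Monoid

variable {M : Type*} [Monoid M]

theorem mul_pow_pow_eq_self {t : M} {m : ℕ} (ht : t * t ^ m = t) (j : ℕ) :
    t * (t ^ m) ^ j = t := by
  induction j with
  | zero => simp
  | succ j ih => rw [pow_succ, ← mul_assoc, ih, ht]

theorem mul_pow_eq_self_of_isIdempotentElem {t : M} {m n : ℕ} (hm : 1 ≤ m)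
    (ht : t ^ (m + 1) = t) (he : IsIdempotentElem (t ^ n)) : t * t ^ n = t :=
  calc t * t ^ n = t * (t ^ n) ^ m := by rw [he.pow_eq (by omega)]
    _ = t * (t ^ m) ^ n := by rw [← pow_mul, ← pow_mul, mul_comm]
    _ = t := mul_pow_pow_eq_self (by rwa [← pow_succ']) n

theorem mul_mul_pow_eq_of_isIdempotentElem {q p : M} {k m n : ℕ} (hk : 1 ≤ k)
    (hq : q ^ (k + 1) = q) (hm : 1 ≤ m) (ht : (q * q * p) ^ (m + 1) = q * q * p)
    (he : IsIdempotentElem ((q * q * p) ^ n)) : q * p * (q * q * p) ^ n = q * p := by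
  have hqp : q * p = q ^ (k - 1) * (q * q * p) := by
    rw [← mul_assoc, ← mul_assoc, ← pow_succ, ← pow_succ, Nat.sub_add_cancel hk, hq]
  rw [hqp, mul_assoc, mul_pow_eq_self_of_isIdempotentElem hm ht he]

end Monoid

theorem qp_mul_idempotent_power_general {S : Type*} [Semigroup S]
    (hcr : ∀ s : S, ∃ k : ℕ, 1 ≤ k ∧ spow s (k + 1) = s)
    (p q : S) (n : ℕ)
    (hidem : spow (q * q * p) n * spow (q * q * p) n = spow (q * q * p) n) :
    (q * p) * spow (q * q * p) n = q * p := by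
  obtain ⟨k, hk, hq⟩ := hcr q
  obtain ⟨m, hm, ht⟩ := hcr (q * q * p)
  rw [← WithOne.coe_inj] at hq ht hidem ⊢
  simp only [WithOne.coe_mul, WithOne.coe_spow, Nat.le_add_left, sup_of_le_left] at hq ht hidem ⊢
  exact mul_mul_pow_eq_of_isIdempotentElem hk hq hm ht hidem

/-- in a finite completely regular semigroup `S` (every element `s`
satisfies `s^(k+1) = s` for some `k ≥ 1`), for all `p, q ∈ S` and every `n ≥ 1`
such that `(q²p)ⁿ` is idempotent, one has `(q·p)·(q²·p)ⁿ = q·p`. -/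
theorem qp_mul_idempotent_power {S : Type*} [Semigroup S] [Fintype S]
    (hcr : ∀ s : S, ∃ k : ℕ, 1 ≤ k ∧ spow s (k + 1) = s)
    (p q : S) (n : ℕ) (hn : 1 ≤ n)
    (hidem : spow (q * q * p) n * spow (q * q * p) n = spow (q * q * p) n) :
    (q * p) * spow (q * q * p) n = q * p :=
  qp_mul_idempotent_power_general hcr p q n hidem
end
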